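/- Let P ∈ ℝ[X,Y] satisfy: (−1) P(X,Y) = P(−X,−Y) (P is even); (0) P(X,Y) = −P(Y,X); (1) 2P(X,Y) = P(Y,−X−Y) − P(X,−X−Y); (2) Y·P(Y,X−Y) + X·P(X,Y−X) = 0. Then P = 0. -/
import Mathlib


noncomputable section
open MvPolynomial

/-- The polynomial ring `ℝ[X,Y]`. -/
abbrev R2 : Type := MvPolynomial (Fin 2) ℝ

def Xv : R2 := MvPolynomial.X 0
def Yv : R2 := MvPolynomial.X 1

/-- Substitution `P(X,Y) ↦ P(p,q)`. -/
def subst (p q : R2) (P : R2) : R2 := MvPolynomial.aeval ![p, q] P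

lemma subst_X (p q : R2) : subst p q Xv = p := by simp [subst, Xv]

lemma subst_Y (p q : R2) : subst p q Yv = q := by simp [subst, Yv]


lemma subst_add (p q a b : R2) : subst p q (a + b) = subst p q a + subst p q b := by
  simp [subst]

lemma subst_mul (p q a b : R2) : subst p q (a * b) = subst p q a * subst p q b := by
  simp [subst]

lemma subst_sub (p q a b : R2) : subst p q (a - b) = subst p q a - subst p q b := by
  simp [subst]

lemma subst_neg (p q a : R2) : subst p q (-a) = -subst p q a := by
  simp [subst]

lemma subst_zero (p q : R2) : subst p q 0 = 0 := by simp [subst]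

lemma subst_subst (p q a b P : R2) :
    subst p q (subst a b P) = subst (subst p q a) (subst p q b) P := by
  have h : ((aeval ![p, q]).comp (aeval ![a, b]) : R2 →ₐ[ℝ] R2) =
      aeval ![aeval ![p, q] a, aeval ![p, q] b] := by
    apply MvPolynomial.algHom_ext
    intro i; fin_cases i <;> simp
  simpa [subst] using DFunLike.congr_fun h P

lemma subst_id (P : R2) : subst Xv Yv P = P := by
  have h : (![Xv, Yv] : Fin 2 → R2) = MvPolynomial.X := by
    funext i; fin_cases i <;> rfl
  simp [subst, h, aeval_X_left_apply]

/-- If `P ∈ ℝ[X,Y]` satisfies (−1) `P(−X,−Y) = P(X,Y)` (P even),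
(0) `P(X,Y) = −P(Y,X)`, (1) `2P(X,Y) = P(Y,−X−Y) − P(X,−X−Y)` and
(2) `Y·P(Y,X−Y) + X·P(X,Y−X) = 0`, then `P = 0`. -/
theorem even_solution_is_zero (P : R2)
    (heven : subst (-Xv) (-Yv) P = P)
    (hanti : subst Yv Xv P = -P)
    (h1 : 2 * P = subst Yv (-Xv - Yv) P - subst Xv (-Xv - Yv) P)
    (h2 : Yv * subst Yv (Xv - Yv) P + Xv * subst Xv (Yv - Xv) P = 0) :
    P = 0 := by
  have hswap : ∀ a b : R2, subst a b P = - subst b a P := by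
    intro a b
    have h := congrArg (subst b a) hanti
    rw [subst_subst, subst_X, subst_Y, subst_neg] at h
    exact h
  have heven' : ∀ a b : R2, subst (-a) (-b) P = subst a b P := by
    intro a b
    have h := congrArg (subst a b) heven
    rw [subst_subst, subst_neg, subst_neg, subst_X, subst_Y] at h
    exact h
  -- B: (X+Y) * P(X, -X-Y) = -(Y*P)
  have hB : (Xv + Yv) * subst Xv (-Xv - Yv) P = -(Yv * P) := by
    have e1 := congrArg (subst (Xv + Yv) Yv) h2
    simp only [subst_add, subst_mul, subst_sub, subst_zero, subst_subst, subst_X, subst_Y] at e1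
    rw [show Xv + Yv - Yv = Xv from by ring] at e1
    rw [hanti] at e1
    have r3 : subst (Xv + Yv) (Yv - (Xv + Yv)) P = - subst Xv (-Xv - Yv) P := by
      rw [hswap]
      congr 1
      have h := heven' Xv (-Xv - Yv)
      rw [show -(-Xv - Yv) = Xv + Yv from by ring] at h
      rw [← h]
      congr 1
      ring
    rw [r3] at e1
    linear_combination -e1
  -- A: (X+Y) * P(Y, -X-Y) = X*P
  have hA : (Xv + Yv) * subst Yv (-Xv - Yv) P = Xv * P := by
    have e2 := congrArg (subst Xv (Xv + Yv)) h2
    simp only [subst_add, subst_mul, subst_sub, subst_zero, subst_subst, subst_X, subst_Y] at e2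
    rw [show Xv + Yv - Xv = Yv from by ring] at e2
    rw [subst_id] at e2
    have r3 : subst (Xv + Yv) (Xv - (Xv + Yv)) P = - subst Yv (-Xv - Yv) P := by
      have h := heven' (-Xv - Yv) Yv
      rw [show -(-Xv - Yv) = Xv + Yv from by ring] at h
      rw [show Xv - (Xv + Yv) = -Yv from by ring, h, hswap]
    rw [r3] at e2
    linear_combination -e2
  have key : (Xv + Yv) * P = 0 := by
    linear_combination (Xv + Yv) * h1 + hA - hB
  have hxy : (Xv + Yv : R2) ≠ 0 := by
    intro h
    have h2 := congrArg (MvPolynomial.eval fun _ => (1 : ℝ)) h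
    simp [Xv, Yv] at h2
  rcases mul_eq_zero.mp key with h | h
  · exact absurd h hxy
  · exact h
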